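/- Let 𝐀 = [[A, B], [B~, D]] : X × Y → X' × Y' be an operator of positive type, i.e., 𝐀 is Hermitian and (A, B) is a positive pair. If 𝐀(x, y) = (0, y') for some (x, y) ∈ X × Y and y' ∈ Y', then (0, y') lies in the range of the shorted operator 𝒮(𝐀) = [[0, 0], [0, σ(𝐀)]]. In other words, ran 𝐀 ∩ Y' ⊆ ran 𝒮(𝐀). -/

import Mathlib

open scoped ComplexOrder ComplexConjugate
open Complex

noncomputable section

/-- For a linear map `R : V → H` into a Hilbert space, `adjMap R : H → V'` is the
operator `R*`, sending `h` to the antilinear functional `v ↦ (h | R v)`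
(in Mathlib's convention, `v ↦ ⟪R v, h⟫`). -/
def adjMap {V H : Type*} [AddCommGroup V] [Module ℂ V]
    [NormedAddCommGroup H] [InnerProductSpace ℂ H] (R : V →ₗ[ℂ] H) :
    H →ₗ[ℂ] (V →ₗ⋆[ℂ] ℂ) where
  toFun h :=
    { toFun := fun v => @inner ℂ _ _ (R v) h
      map_add' := fun v w => by simp [inner_add_left]
      map_smul' := fun c v => by simp [inner_smul_left]; ring }
  map_add' h₁ h₂ := by ext v; simp [inner_add_right]
  map_smul' c h := by ext v; simp [inner_smul_right]

/-- For `B : Y → X'`, the operator `B~ := B'↾X : X → Y'`, `(B~ x) y = conj (⟨B y, x⟩)`. -/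
def Btilde {X Y : Type*} [AddCommGroup X] [Module ℂ X] [AddCommGroup Y] [Module ℂ Y]
    (B : Y →ₗ[ℂ] (X →ₗ⋆[ℂ] ℂ)) : X →ₗ[ℂ] (Y →ₗ⋆[ℂ] ℂ) where
  toFun x :=
    { toFun := fun y => conj (B y x)
      map_add' := fun y₁ y₂ => by simp
      map_smul' := fun c y => by simp }
  map_add' x₁ x₂ := by ext y; simp
  map_smul' c x := by ext y; simp

/-! The hypothesis `A x + B y = 0` says `R*(R x + T y) = 0`, i.e. `R x + T y ⊥ ran R`.
Orthogonality passes to the closure of `ran R`, which contains `ran T`, so also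
`T*(R x + T y) = 0`. Since `B~ = T* R`, this reads `B~ x = -T*T y`, and therefore
`y' = B~ x + D y = D y - T*T y = σ(𝐀) y`. -/

section adjMap

variable {V W H : Type*} [AddCommGroup V] [Module ℂ V] [AddCommGroup W] [Module ℂ W]
  [NormedAddCommGroup H] [InnerProductSpace ℂ H]

@[simp]
theorem adjMap_apply (R : V →ₗ[ℂ] H) (h : H) (v : V) : adjMap R h v = inner ℂ (R v) h :=
  rfl

theorem inner_eq_zero_of_mem_closure_range {R : V →ₗ[ℂ] H} {h k : H}
    (hR : adjMap R h = 0) (hk : k ∈ closure (Set.range R)) : inner ℂ k h = 0 := by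
  have hclosed : IsClosed {k : H | inner ℂ k h = 0} :=
    isClosed_eq (continuous_id.inner continuous_const) continuous_const
  refine closure_minimal ?_ hclosed hk
  rintro _ ⟨v, rfl⟩
  simpa using LinearMap.congr_fun hR v

theorem adjMap_eq_zero_of_range_subset_closure {R : V →ₗ[ℂ] H} {T : W →ₗ[ℂ] H} {h : H}
    (hTran : ∀ w, T w ∈ closure (Set.range R)) (hR : adjMap R h = 0) : adjMap T h = 0 := by
  ext w
  exact inner_eq_zero_of_mem_closure_range hR (hTran w)

theorem Btilde_eq_adjMap_comp {R : V →ₗ[ℂ] H} {T : W →ₗ[ℂ] H} {B : W →ₗ[ℂ] (V →ₗ⋆[ℂ] ℂ)}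
    (hT : ∀ w, adjMap R (T w) = B w) (v : V) : Btilde B v = adjMap T (R v) := by
  ext w
  simp [Btilde, ← hT w]

end adjMap

theorem schur_stmt8_general {X Y H : Type} [AddCommGroup X] [Module ℂ X]
    [AddCommGroup Y] [Module ℂ Y]
    [NormedAddCommGroup H] [InnerProductSpace ℂ H]
    (A : X →ₗ[ℂ] (X →ₗ⋆[ℂ] ℂ)) (B : Y →ₗ[ℂ] (X →ₗ⋆[ℂ] ℂ))
    (D : Y →ₗ[ℂ] (Y →ₗ⋆[ℂ] ℂ))
    (R : X →ₗ[ℂ] H) (T : Y →ₗ[ℂ] H)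
    (hR : ∀ x, A x = adjMap R (R x))
    (hT : ∀ y, adjMap R (T y) = B y)
    (hTran : ∀ y, T y ∈ closure (Set.range R))
    (x : X) (y : Y) (y' : Y →ₗ⋆[ℂ] ℂ)
    (h₁ : A x + B y = 0) (h₂ : Btilde B x + D y = y') :
    ∃ y₀ : Y, y' = D y₀ - adjMap T (T y₀) := by
  have hRorth : adjMap R (R x + T y) = 0 := by rw [map_add, ← hR, hT, h₁]
  have hTorth : adjMap T (R x) + adjMap T (T y) = 0 := by
    rw [← map_add]
    exact adjMap_eq_zero_of_range_subset_closure hTran hRorth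
  refine ⟨y, ?_⟩
  rw [← h₂, Btilde_eq_adjMap_comp hT, eq_neg_of_add_eq_zero_left hTorth]
  abel

theorem schur_stmt8 {X Y H : Type} [AddCommGroup X] [Module ℂ X]
    [AddCommGroup Y] [Module ℂ Y]
    [NormedAddCommGroup H] [InnerProductSpace ℂ H] [CompleteSpace H]
    (A : X →ₗ[ℂ] (X →ₗ⋆[ℂ] ℂ)) (B : Y →ₗ[ℂ] (X →ₗ⋆[ℂ] ℂ))
    (D : Y →ₗ[ℂ] (Y →ₗ⋆[ℂ] ℂ))
    (R : X →ₗ[ℂ] H) (T : Y →ₗ[ℂ] H)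
    (hDh : ∀ y₁ y₂, D y₁ y₂ = conj (D y₂ y₁))
    (hR : ∀ x, A x = adjMap R (R x))
    (hT : ∀ y, adjMap R (T y) = B y)
    (hTran : ∀ y, T y ∈ closure (Set.range R))
    (x : X) (y : Y) (y' : Y →ₗ⋆[ℂ] ℂ)
    (h₁ : A x + B y = 0) (h₂ : Btilde B x + D y = y') :
    ∃ y₀ : Y, y' = D y₀ - adjMap T (T y₀) :=
  schur_stmt8_general A B D R T hR hT hTran x y y' h₁ h₂
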